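/- arXiv:2008.03163 — 7 statements merged into one kernel-verified Lean document; each statement's English description precedes it below -/
import Mathlib

section
/- Let X be a real normed space whose unit sphere is nonempty. If the dual space X* has the weak* symmetric strong diameter 2 property, then X is decomposably octahedral. -/
/-!
Apply the symmetric strong diameter 2 property to the slices `{f : f x > 1 - ε}`, `x ∈ E`: this
gives functionals `f_x` and one `g` of norm almost one with `‖f_x ± g‖ ≤ 1` and
`(f_x ± g) x > 1 - ε`. Take `y` a unit vector with `g y > 1 - ε`. For `y = ∑ yᵢ`, testing
`aᵢ xᵢ + yᵢ` against `f_{xᵢ} + g` and `bᵢ xᵢ - yᵢ` against `f_{xᵢ} - g` makes the `f_{xᵢ} yᵢ`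
terms cancel, leaving `(1 - ε)(aᵢ + bᵢ) + 2 g yᵢ`; summing, `∑ 2 g yᵢ = 2 g y > 2 (1 - ε)`.
-/

/-- A real normed space `X` is decomposably octahedral (DOH) if for every finite subset `E`
of the unit sphere and every `ε > 0` there exists `y` in the unit sphere such that for every
decomposition `y = y₁ + ⋯ + yₙ`, all `x₁, …, xₙ ∈ E` and nonnegative reals `aᵢ, bᵢ`,
`∑ (‖aᵢ xᵢ + yᵢ‖ + ‖bᵢ xᵢ − yᵢ‖) ≥ (1 − ε)(∑ (aᵢ + bᵢ) + 2)`. -/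
def DecomposablyOctahedral (X : Type*) [NormedAddCommGroup X] [NormedSpace ℝ X] : Prop :=
  ∀ E : Finset X, (∀ x ∈ E, ‖x‖ = 1) → ∀ ε : ℝ, 0 < ε → ∃ y : X, ‖y‖ = 1 ∧
    ∀ (n : ℕ) (ys : Fin n → X), ∑ i, ys i = y →
      ∀ xs : Fin n → X, (∀ i, xs i ∈ E) →
      ∀ a b : Fin n → ℝ, (∀ i, 0 ≤ a i) → (∀ i, 0 ≤ b i) →
        (1 - ε) * ((∑ i, (a i + b i)) + 2) ≤
          ∑ i, (‖a i • xs i + ys i‖ + ‖b i • xs i - ys i‖)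

/-- The dual of `X` has the weak* symmetric strong diameter 2 property: for every finite
family of weak* slices `Sᵢ = {f ∈ B_{X*} : f xᵢ > 1 − αᵢ}` (with `xᵢ` in the unit sphere and
`αᵢ > 0`) and every `ε > 0`, there are `fᵢ ∈ Sᵢ` and `g ∈ B_{X*}` with `fᵢ ± g ∈ Sᵢ` for
every `i` and `‖g‖ > 1 − ε`. -/
def WeakStarSSD2P (X : Type*) [NormedAddCommGroup X] [NormedSpace ℝ X] : Prop :=
  ∀ (n : ℕ) (x : Fin n → X), (∀ i, ‖x i‖ = 1) →
    ∀ α : Fin n → ℝ, (∀ i, 0 < α i) → ∀ ε : ℝ, 0 < ε →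
      ∃ (f : Fin n → (X →L[ℝ] ℝ)) (g : X →L[ℝ] ℝ),
        (∀ i, ‖f i‖ ≤ 1 ∧ 1 - α i < f i (x i)) ∧
        (∀ i, ‖f i + g‖ ≤ 1 ∧ 1 - α i < (f i + g) (x i)) ∧
        (∀ i, ‖f i - g‖ ≤ 1 ∧ 1 - α i < (f i - g) (x i)) ∧
        ‖g‖ ≤ 1 ∧ 1 - ε < ‖g‖

namespace ContinuousLinearMap

variable {X : Type*} [NormedAddCommGroup X] [NormedSpace ℝ X]

theorem exists_norm_eq_one_lt_apply_of_lt_opNorm (g : X →L[ℝ] ℝ) {r : ℝ} (hr₀ : 0 ≤ r)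
    (hr : r < ‖g‖) : ∃ y : X, ‖y‖ = 1 ∧ r < g y := by
  lift r to NNReal using hr₀
  obtain ⟨x, hx, hgx⟩ := g.exists_nnnorm_eq_one_lt_apply_of_lt_opNNNorm (𝕜 := ℝ) hr
  have hx : ‖x‖ = 1 := congrArg NNReal.toReal hx
  have hgx : (r : ℝ) < |g x| := hgx
  rcases le_or_gt 0 (g x) with hpos | hneg
  · exact ⟨x, hx, by rwa [abs_of_nonneg hpos] at hgx⟩
  · exact ⟨-x, by rwa [norm_neg], by rwa [map_neg, ← abs_of_neg hneg]⟩

theorem mul_add_apply_le_norm_smul_add {φ : X →L[ℝ] ℝ} (hφ : ‖φ‖ ≤ 1) {x v : X} {a c : ℝ}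
    (ha : 0 ≤ a) (hc : c ≤ φ x) : a * c + φ v ≤ ‖a • x + v‖ :=
  calc a * c + φ v ≤ a * φ x + φ v := by gcongr
    _ = φ (a • x + v) := by simp
    _ ≤ ‖φ (a • x + v)‖ := le_abs_self _
    _ ≤ ‖a • x + v‖ := by simpa using φ.le_of_opNorm_le hφ (a • x + v)

theorem add_mul_add_two_mul_apply_le {f g : X →L[ℝ] ℝ} (hp : ‖f + g‖ ≤ 1) (hm : ‖f - g‖ ≤ 1)
    {x v : X} {a b c : ℝ} (ha : 0 ≤ a) (hb : 0 ≤ b) (hcp : c ≤ (f + g) x) (hcm : c ≤ (f - g) x) :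
    (a + b) * c + 2 * g v ≤ ‖a • x + v‖ + ‖b • x - v‖ := by
  have hplus := mul_add_apply_le_norm_smul_add (v := v) hp ha hcp
  have hminus := mul_add_apply_le_norm_smul_add (v := -v) hm hb hcm
  rw [← sub_eq_add_neg] at hminus
  simp only [add_apply, sub_apply, map_neg] at hplus hminus
  linarith

end ContinuousLinearMap

theorem WeakStarSSD2P.exists_of_finset {X : Type*} [NormedAddCommGroup X] [NormedSpace ℝ X]
    (h : WeakStarSSD2P X) (E : Finset X) (hE : ∀ x ∈ E, ‖x‖ = 1) {α ε : ℝ} (hα : 0 < α)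
    (hε : 0 < ε) : ∃ (f : E → X →L[ℝ] ℝ) (g : X →L[ℝ] ℝ),
      (∀ x : E, ‖f x + g‖ ≤ 1 ∧ 1 - α < (f x + g) x ∧ ‖f x - g‖ ≤ 1 ∧ 1 - α < (f x - g) x) ∧
      1 - ε < ‖g‖ := by
  obtain ⟨f, g, -, hfp, hfm, -, hg⟩ :=
    h E.card (fun i ↦ E.equivFin.symm i) (fun i ↦ hE _ (E.equivFin.symm i).2)
      (fun _ ↦ α) (fun _ ↦ hα) ε hε
  refine ⟨fun x ↦ f (E.equivFin x), g, fun x ↦ ?_, hg⟩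
  simpa [and_assoc] using And.intro (hfp (E.equivFin x)) (hfm (E.equivFin x))

theorem doh_of_weakStarSSD2P_general (X : Type*) [NormedAddCommGroup X] [NormedSpace ℝ X]
    (h : WeakStarSSD2P X) : DecomposablyOctahedral X := by
  intro E hE ε hε
  -- With `min ε 1` the lower bound `1 - min ε 1` on `‖g‖` is nonnegative, so `g` exceeds it at
  -- a point of the unit sphere.
  have hδ : 0 < min ε 1 := lt_min hε one_pos
  obtain ⟨f, g, hfg, hg⟩ := h.exists_of_finset E hE hε hδ
  obtain ⟨y, hy, hgy⟩ :=
    g.exists_norm_eq_one_lt_apply_of_lt_opNorm (by linarith [min_le_right ε 1]) hg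
  refine ⟨y, hy, fun n ys hys xs hxs a b ha hb ↦ ?_⟩
  have hterm : ∀ i, (a i + b i) * (1 - ε) + 2 * g (ys i) ≤
      ‖a i • xs i + ys i‖ + ‖b i • xs i - ys i‖ := fun i ↦ by
    obtain ⟨hp, hcp, hm, hcm⟩ := hfg ⟨xs i, hxs i⟩
    exact ContinuousLinearMap.add_mul_add_two_mul_apply_le hp hm (ha i) (hb i) hcp.le hcm.le
  have hsum : ∑ i, 2 * g (ys i) = 2 * g y := by rw [← Finset.mul_sum, ← map_sum, hys]
  calc (1 - ε) * ((∑ i, (a i + b i)) + 2)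
      ≤ ∑ i, (a i + b i) * (1 - ε) + 2 * g y := by
        rw [← Finset.sum_mul]; linarith [min_le_left ε 1]
    _ = ∑ i, ((a i + b i) * (1 - ε) + 2 * g (ys i)) := by rw [Finset.sum_add_distrib, hsum]
    _ ≤ _ := Finset.sum_le_sum fun i _ ↦ hterm i

theorem doh_of_weakStarSSD2P (X : Type*) [NormedAddCommGroup X] [NormedSpace ℝ X]
    (hX : ∃ x : X, ‖x‖ = 1) (h : WeakStarSSD2P X) : DecomposablyOctahedral X :=
  doh_of_weakStarSSD2P_general X h
end

section
/- Let X and Y be real normed spaces. If X is decomposably octahedral, then the ℓ1-sum X ⊕_1 Y (the product X × Y equipped with the norm ‖(x, y)‖ = ‖x‖ + ‖y‖) is decomposably octahedral. -/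
open Finset

section Normalize

variable {X : Type*} [NormedAddCommGroup X] [NormedSpace ℝ X]

open Classical in
/-- `x / ‖x‖`, with the fallback value `w` at `x = 0`. -/
noncomputable def normalizeOr (w x : X) : X :=
  if x = 0 then w else ‖x‖⁻¹ • x

theorem norm_normalizeOr {w : X} (hw : ‖w‖ = 1) (x : X) : ‖normalizeOr w x‖ = 1 := by
  unfold normalizeOr
  split_ifs with hx
  · exact hw
  · exact norm_smul_inv_norm hx

theorem norm_smul_normalizeOr (w x : X) : ‖x‖ • normalizeOr w x = x := by
  unfold normalizeOr
  split_ifs with hx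
  · simp [hx]
  · rw [smul_inv_smul₀ (norm_ne_zero_iff.mpr hx)]

end Normalize

theorem DecomposablyOctahedral.exists_norm_eq_one {X : Type*} [NormedAddCommGroup X]
    [NormedSpace ℝ X] (h : DecomposablyOctahedral X) : ∃ w : X, ‖w‖ = 1 := by
  obtain ⟨w, hw, -⟩ := h ∅ (by simp) 1 one_pos
  exact ⟨w, hw⟩

theorem add_mul_norm_le_norm_add_add_norm_sub {X : Type*} [NormedAddCommGroup X]
    [NormedSpace ℝ X] {a b : ℝ} (ha : 0 ≤ a) (hb : 0 ≤ b) (x z : X) :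
    (a + b) * ‖x‖ ≤ ‖a • x + z‖ + ‖b • x - z‖ :=
  calc (a + b) * ‖x‖ = ‖(a • x + z) + (b • x - z)‖ := by
        rw [show (a • x + z) + (b • x - z) = (a + b) • x by module, norm_smul,
          Real.norm_of_nonneg (add_nonneg ha hb)]
    _ ≤ ‖a • x + z‖ + ‖b • x - z‖ := norm_add_le _ _

section L1Sum

variable {X Y : Type*} [NormedAddCommGroup X] [NormedSpace ℝ X]
  [NormedAddCommGroup Y] [NormedSpace ℝ Y]

theorem WithLp.prod_L1_norm_fst_add_add_norm_fst_sub_add_mul_norm_snd_le {a b : ℝ} (ha : 0 ≤ a)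
    (hb : 0 ≤ b) (x z : WithLp 1 (X × Y)) :
    ‖a • x.fst + z.fst‖ + ‖b • x.fst - z.fst‖ + (a + b) * ‖x.snd‖ ≤ ‖a • x + z‖ + ‖b • x - z‖ := by
  rw [WithLp.prod_norm_eq_of_L1 (a • x + z), WithLp.prod_norm_eq_of_L1 (b • x - z)]
  have := add_mul_norm_le_norm_add_add_norm_sub ha hb x.snd z.snd
  simp only [WithLp.add_fst, WithLp.add_snd, WithLp.sub_fst, WithLp.sub_snd, WithLp.smul_fst,
    WithLp.smul_snd]
  linarith

theorem WithLp.prod_L1_doh_bound_of_fst {ε : ℝ} (hε : 0 < ε) {n : ℕ}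
    (xs zs : Fin n → WithLp 1 (X × Y)) (hxs : ∀ i, ‖xs i‖ = 1) (a b : Fin n → ℝ)
    (ha : ∀ i, 0 ≤ a i) (hb : ∀ i, 0 ≤ b i)
    (hfst : (1 - ε) * (∑ i, (a i * ‖(xs i).fst‖ + b i * ‖(xs i).fst‖) + 2) ≤
      ∑ i, (‖a i • (xs i).fst + (zs i).fst‖ + ‖b i • (xs i).fst - (zs i).fst‖)) :
    (1 - ε) * (∑ i, (a i + b i) + 2) ≤ ∑ i, (‖a i • xs i + zs i‖ + ‖b i • xs i - zs i‖) := by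
  set T := ∑ i, (a i + b i) * ‖(xs i).snd‖
  have hsplit : ∑ i, (a i + b i) = ∑ i, (a i * ‖(xs i).fst‖ + b i * ‖(xs i).fst‖) + T := by
    rw [← sum_add_distrib]
    refine sum_congr rfl fun i _ => ?_
    linear_combination (a i + b i) * ((WithLp.prod_norm_eq_of_L1 (xs i)).symm.trans (hxs i)).symm
  have hT : 0 ≤ T := sum_nonneg fun i _ => mul_nonneg (add_nonneg (ha i) (hb i)) (norm_nonneg _)
  calc (1 - ε) * (∑ i, (a i + b i) + 2)
      = (1 - ε) * (∑ i, (a i * ‖(xs i).fst‖ + b i * ‖(xs i).fst‖) + 2) + (1 - ε) * T := by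
        rw [hsplit]; ring
    _ ≤ ∑ i, (‖a i • (xs i).fst + (zs i).fst‖ + ‖b i • (xs i).fst - (zs i).fst‖) + T := by
        nlinarith
    _ = ∑ i, (‖a i • (xs i).fst + (zs i).fst‖ + ‖b i • (xs i).fst - (zs i).fst‖
          + (a i + b i) * ‖(xs i).snd‖) := sum_add_distrib.symm
    _ ≤ ∑ i, (‖a i • xs i + zs i‖ + ‖b i • xs i - zs i‖) := sum_le_sum fun i _ =>
        WithLp.prod_L1_norm_fst_add_add_norm_fst_sub_add_mul_norm_snd_le (ha i) (hb i) _ _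

end L1Sum

/-- If `X` is DOH, then the ℓ₁-sum `X ⊕₁ Y` (with norm `‖(x, y)‖ = ‖x‖ + ‖y‖`) is DOH. -/
theorem doh_l1_sum_of_doh_left (X Y : Type*) [NormedAddCommGroup X] [NormedSpace ℝ X]
    [NormedAddCommGroup Y] [NormedSpace ℝ Y]
    (h : DecomposablyOctahedral X) :
    DecomposablyOctahedral (WithLp 1 (X × Y)) := by
  classical
  intro E hE ε hε
  obtain ⟨w, hw⟩ := h.exists_norm_eq_one
  obtain ⟨y, hy, hy_doh⟩ := h (E.image fun e => normalizeOr w e.fst)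
    (by simp [norm_normalizeOr hw]) ε hε
  refine ⟨WithLp.toLp 1 (y, 0), by simpa using hy, ?_⟩
  intro n zs hsum xs hxs a b ha hb
  have hsum_fst : ∑ i, (zs i).fst = y := by
    simpa using congrArg (WithLp.fstₗ 1 ℝ X Y) hsum
  have hfst := hy_doh n (fun i => (zs i).fst) hsum_fst (fun i => normalizeOr w (xs i).fst)
    (fun i => mem_image_of_mem _ (hxs i)) (fun i => a i * ‖(xs i).fst‖)
    (fun i => b i * ‖(xs i).fst‖) (fun i => mul_nonneg (ha i) (norm_nonneg _))
    (fun i => mul_nonneg (hb i) (norm_nonneg _))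
  simp only [mul_smul, norm_smul_normalizeOr] at hfst
  exact WithLp.prod_L1_doh_bound_of_fst hε xs zs (fun i => hE _ (hxs i)) a b ha hb hfst
end

section
/- Let X and Y be nontrivial real normed spaces. If the ℓ1-sum X ⊕_1 Y (the product X × Y equipped with the norm ‖(x, y)‖ = ‖x‖ + ‖y‖) is decomposably octahedral, then X is decomposably octahedral or Y is decomposably octahedral. -/
/-!
Call a decomposition `y = ∑ yᵢ` with directions `xᵢ ∈ E` and weights `aᵢ, bᵢ ≥ 0` short when
`∑ (‖aᵢ • xᵢ + yᵢ‖ + ‖bᵢ • xᵢ - yᵢ‖) ≤ (1 - ε) * (∑ (aᵢ + bᵢ) + 2 * ‖y‖)`. A space fails to be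
DOH exactly when, for some finite subset `E` of the sphere and some `ε > 0`, every vector has a
short decomposition; the condition is positively homogeneous, so the sphere is where it has to be
checked. If it holds in `X` for `E` and in `Y` for `F`, concatenating short decompositions of `x`
and `y` gives one of `(x, y)` in `X ⊕₁ Y` for `E ∪ F`, since the `ℓ¹` norm adds over the summands.
-/

open WithLp

section

variable {X Y Z : Type*} [NormedAddCommGroup X] [NormedSpace ℝ X]
  [NormedAddCommGroup Y] [NormedSpace ℝ Y] [NormedAddCommGroup Z] [NormedSpace ℝ Z]

def HasShortDecomposition (E : Finset X) (ε : ℝ) (y : X) : Prop :=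
  ∃ (n : ℕ) (ys xs : Fin n → X) (a b : Fin n → ℝ), ∑ i, ys i = y ∧ (∀ i, xs i ∈ E) ∧
    (∀ i, 0 ≤ a i) ∧ (∀ i, 0 ≤ b i) ∧
    ∑ i, (‖a i • xs i + ys i‖ + ‖b i • xs i - ys i‖) ≤ (1 - ε) * (∑ i, (a i + b i) + 2 * ‖y‖)

namespace HasShortDecomposition

variable {E : Finset X} {ε : ℝ} {y : X}

theorem zero : HasShortDecomposition E ε 0 :=
  ⟨0, ![], ![], ![], ![], by simp⟩

theorem smul (h : HasShortDecomposition E ε y) {t : ℝ} (ht : 0 ≤ t) :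
    HasShortDecomposition E ε (t • y) := by
  obtain ⟨n, ys, xs, a, b, hsum, hxs, ha, hb, hle⟩ := h
  refine ⟨n, t • ys, xs, t • a, t • b, by simp [← Finset.smul_sum, hsum], hxs,
    fun i => mul_nonneg ht (ha i), fun i => mul_nonneg ht (hb i), ?_⟩
  have key : ∀ i, ‖(t • a) i • xs i + (t • ys) i‖ + ‖(t • b) i • xs i - (t • ys) i‖ =
      t * (‖a i • xs i + ys i‖ + ‖b i • xs i - ys i‖) := fun i => by
    simp only [Pi.smul_apply, smul_eq_mul, mul_smul, ← smul_add, ← smul_sub, norm_smul,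
      Real.norm_of_nonneg ht, mul_add]
  calc ∑ i, (‖(t • a) i • xs i + (t • ys) i‖ + ‖(t • b) i • xs i - (t • ys) i‖)
      = t * ∑ i, (‖a i • xs i + ys i‖ + ‖b i • xs i - ys i‖) := by
        simp only [key, Finset.mul_sum]
    _ ≤ t * ((1 - ε) * (∑ i, (a i + b i) + 2 * ‖y‖)) := mul_le_mul_of_nonneg_left hle ht
    _ = (1 - ε) * (∑ i, ((t • a) i + (t • b) i) + 2 * ‖t • y‖) := by
        simp only [Pi.smul_apply, smul_eq_mul, norm_smul, Real.norm_of_nonneg ht, ← mul_add,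
          ← Finset.mul_sum]
        ring

theorem of_le (h : HasShortDecomposition E ε y) {ε' : ℝ} (hε : ε' ≤ ε) :
    HasShortDecomposition E ε' y := by
  obtain ⟨n, ys, xs, a, b, hsum, hxs, ha, hb, hle⟩ := h
  refine ⟨n, ys, xs, a, b, hsum, hxs, ha, hb, hle.trans ?_⟩
  have : 0 ≤ ∑ i, (a i + b i) + 2 * ‖y‖ := by
    have := Finset.sum_nonneg fun i (_ : i ∈ Finset.univ) => add_nonneg (ha i) (hb i)
    positivity
  exact mul_le_mul_of_nonneg_right (by linarith) this

theorem map (h : HasShortDecomposition E ε y) (f : X →ₗᵢ[ℝ] Z) {F : Finset Z}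
    (hF : ∀ x ∈ E, f x ∈ F) : HasShortDecomposition F ε (f y) := by
  obtain ⟨n, ys, xs, a, b, hsum, hxs, ha, hb, hle⟩ := h
  refine ⟨n, f ∘ ys, f ∘ xs, a, b, by simp [← map_sum, hsum], fun i => hF _ (hxs i), ha, hb, ?_⟩
  simpa only [Function.comp_apply, ← map_smul, ← map_add, ← map_sub, f.norm_map] using hle

theorem add {y' : X} (h : HasShortDecomposition E ε y) (h' : HasShortDecomposition E ε y')
    (hnorm : ‖y + y'‖ = ‖y‖ + ‖y'‖) : HasShortDecomposition E ε (y + y') := by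
  obtain ⟨n, ys, xs, a, b, hsum, hxs, ha, hb, hle⟩ := h
  obtain ⟨m, ys', xs', a', b', hsum', hxs', ha', hb', hle'⟩ := h'
  refine ⟨n + m, Fin.append ys ys', Fin.append xs xs', Fin.append a a', Fin.append b b',
    ?_, Fin.addCases (by simpa) (by simpa), Fin.addCases (by simpa) (by simpa),
    Fin.addCases (by simpa) (by simpa), ?_⟩
  · simp [Fin.sum_univ_add, hsum, hsum']
  · simp only [Fin.sum_univ_add, Fin.append_left, Fin.append_right, hnorm]
    linarith

end HasShortDecomposition

theorem hasShortDecomposition_of_forall_norm_eq_one {E : Finset X} {ε : ℝ}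
    (h : ∀ y : X, ‖y‖ = 1 → HasShortDecomposition E ε y) (y : X) :
    HasShortDecomposition E ε y := by
  rcases eq_or_ne y 0 with rfl | hy
  · exact .zero
  · simpa [smul_inv_smul₀ (norm_ne_zero_iff.2 hy)] using
      (h (‖y‖⁻¹ • y) (norm_smul_inv_norm hy)).smul (norm_nonneg y)

theorem not_decomposablyOctahedral_iff :
    ¬ DecomposablyOctahedral X ↔
      ∃ E : Finset X, (∀ x ∈ E, ‖x‖ = 1) ∧ ∃ ε > 0, ∀ y, HasShortDecomposition E ε y := by
  constructor
  · intro hX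
    unfold DecomposablyOctahedral at hX
    push Not at hX
    obtain ⟨E, hE, ε, hε, H⟩ := hX
    refine ⟨E, hE, ε, hε, hasShortDecomposition_of_forall_norm_eq_one fun y hy => ?_⟩
    obtain ⟨n, ys, hsum, xs, hxs, a, b, ha, hb, hlt⟩ := H y hy
    exact ⟨n, ys, xs, a, b, hsum, hxs, ha, hb, by rw [hy, mul_one]; exact hlt.le⟩
  · rintro ⟨E, hE, ε, hε, H⟩ hX
    obtain ⟨y, hy, Hy⟩ := hX E hE (ε / 2) (half_pos hε)
    obtain ⟨n, ys, xs, a, b, hsum, hxs, ha, hb, hle⟩ := H y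
    have hlow := Hy n ys hsum xs hxs a b ha hb
    have hS := Finset.sum_nonneg fun i (_ : i ∈ Finset.univ) => add_nonneg (ha i) (hb i)
    rw [hy] at hle
    nlinarith

namespace WithLp

noncomputable def inlL1 : X →ₗᵢ[ℝ] WithLp 1 (X × Y) where
  toLinearMap := (WithLp.linearEquiv 1 ℝ (X × Y)).symm.toLinearMap ∘ₗ LinearMap.inl ℝ X Y
  norm_map' := norm_toLp_fst 1 X Y

noncomputable def inrL1 : Y →ₗᵢ[ℝ] WithLp 1 (X × Y) where
  toLinearMap := (WithLp.linearEquiv 1 ℝ (X × Y)).symm.toLinearMap ∘ₗ LinearMap.inr ℝ X Y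
  norm_map' := norm_toLp_snd 1 X Y

end WithLp

theorem HasShortDecomposition.of_fst_of_snd {E : Finset X} {F : Finset Y}
    {G : Finset (WithLp 1 (X × Y))} {ε : ℝ} {z : WithLp 1 (X × Y)}
    (hX : HasShortDecomposition E ε z.fst)
    (hY : HasShortDecomposition F ε z.snd) (hE : ∀ x ∈ E, toLp 1 (x, (0 : Y)) ∈ G)
    (hF : ∀ y ∈ F, toLp 1 ((0 : X), y) ∈ G) : HasShortDecomposition G ε z := by
  have hz : WithLp.inlL1 z.fst + WithLp.inrL1 z.snd = z := by
    change toLp 1 (z.fst, 0) + toLp 1 (0, z.snd) = z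
    rw [← toLp_add, Prod.mk_add_mk, add_zero, zero_add]
    rfl
  rw [← hz]
  refine (hX.map _ hE).add (hY.map _ hF) ?_
  rw [hz, prod_norm_eq_of_L1, LinearIsometry.norm_map, LinearIsometry.norm_map]

end

theorem doh_or_doh_of_doh_l1_sum_general (X Y : Type*) [NormedAddCommGroup X] [NormedSpace ℝ X]
    [NormedAddCommGroup Y] [NormedSpace ℝ Y]
    (h : DecomposablyOctahedral (WithLp 1 (X × Y))) :
    DecomposablyOctahedral X ∨ DecomposablyOctahedral Y := by
  classical
  by_contra hXY
  obtain ⟨E, hE, ε, hε, hX⟩ := not_decomposablyOctahedral_iff.1 (not_or.1 hXY).1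
  obtain ⟨F, hF, δ, hδ, hY⟩ := not_decomposablyOctahedral_iff.1 (not_or.1 hXY).2
  refine not_decomposablyOctahedral_iff.2 ⟨E.image (fun x => toLp 1 (x, 0)) ∪
    F.image (fun y => toLp 1 (0, y)), ?_, min ε δ, lt_min hε hδ, fun z => ?_⟩ h
  · simp only [Finset.mem_union, Finset.mem_image]
    rintro _ (⟨x, hx, rfl⟩ | ⟨y, hy, rfl⟩)
    · rw [norm_toLp_fst, hE x hx]
    · rw [norm_toLp_snd, hF y hy]
  · exact ((hX z.fst).of_le (min_le_left ε δ)).of_fst_of_snd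
      ((hY z.snd).of_le (min_le_right ε δ))
      (fun x hx => Finset.mem_union_left _ (Finset.mem_image_of_mem _ hx))
      (fun y hy => Finset.mem_union_right _ (Finset.mem_image_of_mem _ hy))

/-- If the ℓ₁-sum `X ⊕₁ Y` (with norm `‖(x, y)‖ = ‖x‖ + ‖y‖`) of nontrivial spaces is DOH,
then `X` is DOH or `Y` is DOH. -/
theorem doh_or_doh_of_doh_l1_sum (X Y : Type*) [NormedAddCommGroup X] [NormedSpace ℝ X]
    [NormedAddCommGroup Y] [NormedSpace ℝ Y] [Nontrivial X] [Nontrivial Y]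
    (h : DecomposablyOctahedral (WithLp 1 (X × Y))) :
    DecomposablyOctahedral X ∨ DecomposablyOctahedral Y :=
  doh_or_doh_of_doh_l1_sum_general X Y h
end

section
/- Let X and Y be nontrivial real normed spaces, let N : ℝ × ℝ → ℝ be a norm on ℝ² that is absolute (N(a, b) = N(|a|, |b|) for all a, b), normalised (N(1, 0) = N(0, 1) = 1), and satisfies N(1, 1) < 2 (equivalently, N is different from the ℓ1 norm). Suppose the product X × Y is equipped with a norm satisfying ‖(x, y)‖ = N(‖x‖, ‖y‖) for all x ∈ X and y ∈ Y. Then X ⊕_N Y is not decomposably octahedral. -/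
set_option maxHeartbeats 1000000


/-- If `N` is an absolute normalised norm on `ℝ²` with `N(1,1) < 2` (i.e. different from
the ℓ₁ norm), then any space `Z` which is `X × Y` (for nontrivial `X`, `Y`) equipped with
the norm `‖(x, y)‖ = N(‖x‖, ‖y‖)` is not decomposably octahedral. -/
theorem not_doh_absolute_sum (X Y Z : Type*)
    [NormedAddCommGroup X] [NormedSpace ℝ X]
    [NormedAddCommGroup Y] [NormedSpace ℝ Y]
    [NormedAddCommGroup Z] [NormedSpace ℝ Z]
    [Nontrivial X] [Nontrivial Y]
    (N : ℝ × ℝ → ℝ)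
    (N_eq_zero : ∀ v : ℝ × ℝ, N v = 0 ↔ v = 0)
    (N_add : ∀ v w : ℝ × ℝ, N (v + w) ≤ N v + N w)
    (N_smul : ∀ (c : ℝ) (v : ℝ × ℝ), N (c • v) = |c| * N v)
    (N_absolute : ∀ a b : ℝ, N (a, b) = N (|a|, |b|))
    (N_norm₁ : N (1, 0) = 1) (N_norm₂ : N (0, 1) = 1)
    (N_ne_l1 : N (1, 1) < 2)
    (e : Z ≃ₗ[ℝ] X × Y)
    (hnorm : ∀ z : Z, ‖z‖ = N (‖(e z).1‖, ‖(e z).2‖)) :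
    ¬ DecomposablyOctahedral Z := by
  classical
  -- basic facts about N
  have N1 : ∀ a : ℝ, 0 ≤ a → N (a, 0) = a := by
    intro a ha
    have : (a, (0:ℝ)) = a • ((1:ℝ), (0:ℝ)) := by simp [Prod.ext_iff]
    rw [this, N_smul, N_norm₁, abs_of_nonneg ha, mul_one]
  have N2 : ∀ b : ℝ, 0 ≤ b → N (0, b) = b := by
    intro b hb
    have : ((0:ℝ), b) = b • ((0:ℝ), (1:ℝ)) := by simp [Prod.ext_iff]
    rw [this, N_smul, N_norm₂, abs_of_nonneg hb, mul_one]
  have Ndiag : ∀ a : ℝ, 0 ≤ a → N (a, a) = a * N (1, 1) := by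
    intro a ha
    have : (a, a) = a • ((1:ℝ), (1:ℝ)) := by simp [Prod.ext_iff]
    rw [this, N_smul, abs_of_nonneg ha]
  have Nabsneg : ∀ a b : ℝ, 0 ≤ a → 0 ≤ b → N (a, -b) = N (a, b) := by
    intro a b ha hb
    rw [N_absolute a (-b), abs_neg, ← N_absolute a b]
  have Nabsneg' : ∀ a b : ℝ, 0 ≤ a → 0 ≤ b → N (-a, b) = N (a, b) := by
    intro a b ha hb
    rw [N_absolute (-a) b, abs_neg, ← N_absolute a b]
  -- monotonicity: N (a, 0) ≤ N (a, b) and N (0, b) ≤ N (a, b) for a, b ≥ 0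
  have mono1 : ∀ a b : ℝ, 0 ≤ a → 0 ≤ b → N (a, 0) ≤ N (a, b) := by
    intro a b ha hb
    have h := N_add (a, b) (a, -b)
    have h2 : ((a, b) + (a, -b) : ℝ × ℝ) = (a + a, 0) := by
      simp [Prod.ext_iff]
    rw [h2, N1 (a + a) (by linarith), Nabsneg a b ha hb] at h
    have := N1 a ha
    nlinarith [h]
  have mono2 : ∀ a b : ℝ, 0 ≤ a → 0 ≤ b → N (0, b) ≤ N (a, b) := by
    intro a b ha hb
    have h := N_add (a, b) (-a, b)
    have h2 : ((a, b) + (-a, b) : ℝ × ℝ) = (0, b + b) := by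
      simp [Prod.ext_iff]
    rw [h2, N2 (b + b) (by linarith), Nabsneg' a b ha hb] at h
    have := N2 b hb
    nlinarith [h]
  have hN11ge : (1:ℝ) ≤ N (1, 1) := by
    have := mono1 1 1 zero_le_one zero_le_one
    rw [N_norm₁] at this; exact this
  set δ : ℝ := 2 - N (1, 1) with hδ
  have hδpos : 0 < δ := by simp only [hδ]; linarith
  have hδle : δ ≤ 1 := by simp only [hδ]; linarith
  -- unit vectors
  obtain ⟨x₀, hx₀⟩ := exists_norm_eq X (zero_le_one)
  obtain ⟨y₀, hy₀⟩ := exists_norm_eq Y (zero_le_one)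
  set u : Z := e.symm (x₀, 0) with hu_def
  set v : Z := e.symm (0, y₀) with hv_def
  have heu : e u = (x₀, 0) := e.apply_symm_apply _
  have hev : e v = (0, y₀) := e.apply_symm_apply _
  have hu : ‖u‖ = 1 := by rw [hnorm, heu]; simp [hx₀, N_norm₁]
  have hv : ‖v‖ = 1 := by rw [hnorm, hev]; simp [hy₀, N_norm₂]
  intro hDOH
  obtain ⟨y, hy1, hkey⟩ := hDOH {u, v}
    (by
      intro x hx
      rcases Finset.mem_insert.mp hx with h | h
      · rw [h]; exact hu
      · rw [Finset.mem_singleton.mp h]; exact hv)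
    (δ ^ 2 / 6) (by positivity)
  set p : X := (e y).1 with hp
  set q : Y := (e y).2 with hq
  set α : ℝ := ‖p‖ with hα
  set β : ℝ := ‖q‖ with hβ
  have hαnn : 0 ≤ α := norm_nonneg _
  have hβnn : 0 ≤ β := norm_nonneg _
  have hαβ : N (α, β) = 1 := by rw [← hnorm, hy1]
  have hα1 : α ≤ 1 := by
    have := mono1 α β hαnn hβnn
    rw [N1 α hαnn, hαβ] at this; exact this
  have hβ1 : β ≤ 1 := by
    have := mono2 α β hαnn hβnn
    rw [N2 β hβnn, hαβ] at this; exact this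
  -- key estimate: α + β ≤ 1 + δ
  have hsum : α + β ≤ 1 + δ := by
    rcases le_total β α with h | h
    · -- (α, α) = (α, β) + (0, α - β)
      have h1 := N_add (α, β) (0, α - β)
      have h2 : ((α, β) + (0, α - β) : ℝ × ℝ) = (α, α) := by
        simp [Prod.ext_iff]
      rw [h2, hαβ, N2 (α - β) (by linarith), Ndiag α hαnn] at h1
      -- α * N(1,1) ≤ 1 + α - β, i.e. α(2-δ) ≤ 1 + α - β
      have : α * (2 - δ) ≤ 1 + (α - β) := by
        simpa [hδ] using h1
      nlinarith
    · have h1 := N_add (α, β) (β - α, 0)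
      have h2 : ((α, β) + (β - α, 0) : ℝ × ℝ) = (β, β) := by
        simp [Prod.ext_iff]
      rw [h2, hαβ, N1 (β - α) (by linarith), Ndiag β hβnn] at h1
      have : β * (2 - δ) ≤ 1 + (β - α) := by
        simpa [hδ] using h1
      nlinarith
  -- the test decomposition
  have hdecomp : ∑ i, (![e.symm (p, 0), e.symm (0, q)] : Fin 2 → Z) i = y := by
    rw [Fin.sum_univ_two]
    simp only [Matrix.cons_val_zero, Matrix.cons_val_one, Matrix.head_cons]
    rw [← map_add]
    have : ((p, 0) + (0, q) : X × Y) = e y := by simp [hp, hq, Prod.ext_iff]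
    rw [this, e.symm_apply_apply]
  have hmem : ∀ i : Fin 2, (![v, u] : Fin 2 → Z) i ∈ ({u, v} : Finset Z) := by
    intro i; fin_cases i <;> simp
  have hann : ∀ i : Fin 2, 0 ≤ (![α, β] : Fin 2 → ℝ) i := by
    intro i; fin_cases i <;> simpa using ‹_›
  have hkey2 := hkey 2 ![e.symm (p, 0), e.symm (0, q)] hdecomp ![v, u] hmem
    ![α, β] ![α, β] hann hann
  -- compute the four norms
  have n1 : ‖α • v + e.symm (p, 0)‖ = N (α, α) := by
    rw [hnorm, map_add, map_smul, hev, e.apply_symm_apply]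
    have h1 : (α • ((0 : X), y₀) + (p, (0 : Y))).1 = p := by simp
    have h2 : (α • ((0 : X), y₀) + (p, (0 : Y))).2 = α • y₀ := by simp
    rw [h1, h2, norm_smul, hy₀]
    simp [hα, abs_norm]
  have n2 : ‖α • v - e.symm (p, 0)‖ = N (α, α) := by
    rw [hnorm, map_sub, map_smul, hev, e.apply_symm_apply]
    have h1 : (α • ((0 : X), y₀) - (p, (0 : Y))).1 = -p := by simp
    have h2 : (α • ((0 : X), y₀) - (p, (0 : Y))).2 = α • y₀ := by simp
    rw [h1, h2, norm_neg, norm_smul, hy₀]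
    simp [hα, abs_norm]
  have n3 : ‖β • u + e.symm (0, q)‖ = N (β, β) := by
    rw [hnorm, map_add, map_smul, heu, e.apply_symm_apply]
    have h1 : (β • (x₀, (0 : Y)) + ((0 : X), q)).1 = β • x₀ := by simp
    have h2 : (β • (x₀, (0 : Y)) + ((0 : X), q)).2 = q := by simp
    rw [h1, h2, norm_smul, hx₀]
    simp [hβ, abs_norm]
  have n4 : ‖β • u - e.symm (0, q)‖ = N (β, β) := by
    rw [hnorm, map_sub, map_smul, heu, e.apply_symm_apply]
    have h1 : (β • (x₀, (0 : Y)) - ((0 : X), q)).1 = β • x₀ := by simp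
    have h2 : (β • (x₀, (0 : Y)) - ((0 : X), q)).2 = -q := by simp
    rw [h1, h2, norm_neg, norm_smul, hx₀]
    simp [hβ, abs_norm]
  rw [Fin.sum_univ_two, Fin.sum_univ_two] at hkey2
  simp only [Matrix.cons_val_zero, Matrix.cons_val_one, Matrix.head_cons] at hkey2
  rw [n1, n2, n3, n4, Ndiag α hαnn, Ndiag β hβnn] at hkey2
  -- hkey2 : (1 - δ^2/6) * ((α + α) + (β + β) + 2) ≤ 2α N(1,1) + 2β N(1,1)
  have hN11 : N (1, 1) = 2 - δ := by simp [hδ]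
  rw [hN11] at hkey2
  nlinarith [hkey2, hsum, hδpos, hδle, hαnn, hβnn, sq_nonneg δ, sq_nonneg (α + β)]
end

section
/- Let X and Y be nontrivial real normed spaces and let 1 < p ≤ ∞. Then the ℓp-sum X ⊕_p Y (the product X × Y equipped with the norm ‖(x, y)‖ = (‖x‖^p + ‖y‖^p)^{1/p} for p < ∞ and ‖(x, y)‖ = max(‖x‖, ‖y‖) for p = ∞) is not decomposably octahedral. -/
open WithLp

theorem DecomposablyOctahedral.exists_forall_add_eq {E : Type*} [NormedAddCommGroup E]
    [NormedSpace ℝ E] (h : DecomposablyOctahedral E) {x₁ x₂ : E} (h₁ : ‖x₁‖ = 1)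
    (h₂ : ‖x₂‖ = 1) {ε : ℝ} (hε : 0 < ε) :
    ∃ y : E, ‖y‖ = 1 ∧ ∀ y₁ y₂ : E, y₁ + y₂ = y →
      6 * (1 - ε) ≤ ‖x₁ + y₁‖ + ‖x₁ - y₁‖ + (‖x₂ + y₂‖ + ‖x₂ - y₂‖) := by
  classical
  obtain ⟨y, hy, hdoh⟩ := h {x₁, x₂} (by simp [h₁, h₂]) ε hε
  refine ⟨y, hy, fun y₁ y₂ hsum => ?_⟩
  have := hdoh 2 ![y₁, y₂] (by simpa [Fin.sum_univ_two] using hsum) ![x₁, x₂]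
    (fun i => by fin_cases i <;> simp) 1 1 (fun _ => zero_le_one) (fun _ => zero_le_one)
  simp only [Fin.sum_univ_two, Pi.one_apply, one_smul, Matrix.cons_val_zero,
    Matrix.cons_val_one] at this
  linarith

namespace WithLp

variable {p : ENNReal} [Fact (1 ≤ p)] {X Y : Type*} [SeminormedAddCommGroup X]
  [SeminormedAddCommGroup Y]

theorem prod_norm_toLp_congr {a a' : X} {b b' : Y} (ha : ‖a‖ = ‖a'‖) (hb : ‖b‖ = ‖b'‖) :
    ‖toLp p (a, b)‖ = ‖toLp p (a', b')‖ := by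
  rcases eq_or_ne p ⊤ with rfl | hp
  · simp only [prod_norm_toLp, Prod.norm_mk, ha, hb]
  · simp only [prod_norm_eq_add ((ENNReal.toReal_pos_iff_ne_top p).2 hp), toLp_fst, toLp_snd,
      ha, hb]

theorem norm_toLp_fst_add_norm_toLp_snd_le {z : WithLp p (X × Y)} (hz : ‖z‖ ≤ 1) {u : X} {v : Y}
    (hu : ‖u‖ = 1) (hv : ‖v‖ = 1) :
    ‖toLp p (z.fst, v)‖ + ‖toLp p (u, z.snd)‖ ≤ 2 + p.toReal⁻¹ := by
  rcases eq_or_ne p ⊤ with rfl | hp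
  · have h₁ := (norm_fst_le X z).trans hz
    have h₂ := (norm_snd_le X z).trans hz
    simp only [prod_norm_toLp, Prod.norm_mk, hu, hv, sup_of_le_right h₁, sup_of_le_left h₂,
      ENNReal.toReal_top, inv_zero]
    norm_num
  · have hp0 : 0 < p.toReal := (ENNReal.toReal_pos_iff_ne_top p).2 hp
    have hq : p.toReal⁻¹ ≤ 1 :=
      inv_le_one_of_one_le₀ (by simpa using ENNReal.toReal_mono hp (Fact.out : 1 ≤ p))
    simp only [prod_norm_eq_add hp0, toLp_fst, toLp_snd, hu, hv, Real.one_rpow, one_div]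
    set s := ‖z.fst‖ ^ p.toReal
    set t := ‖z.snd‖ ^ p.toReal
    have hst : s + t ≤ 1 := by
      rw [prod_norm_eq_add hp0, one_div,
        Real.rpow_inv_le_iff_of_pos (by positivity) zero_le_one hp0] at hz
      simpa using hz
    have h₁ : (s + 1) ^ p.toReal⁻¹ ≤ 1 + p.toReal⁻¹ * s := add_comm 1 s ▸
      rpow_one_add_le_one_add_mul_self (by linarith [show 0 ≤ s by positivity]) (by positivity) hq
    have h₂ : (1 + t) ^ p.toReal⁻¹ ≤ 1 + p.toReal⁻¹ * t :=
      rpow_one_add_le_one_add_mul_self (by linarith [show 0 ≤ t by positivity]) (by positivity) hq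
    have h₃ : p.toReal⁻¹ * (s + t) ≤ p.toReal⁻¹ := mul_le_of_le_one_right (by positivity) hst
    linarith

end WithLp

/-- For nontrivial `X`, `Y` and `1 < p ≤ ∞`, the ℓ_p-sum `X ⊕_p Y` is not DOH. -/
theorem not_doh_lp_sum (X Y : Type*) [NormedAddCommGroup X] [NormedSpace ℝ X]
    [NormedAddCommGroup Y] [NormedSpace ℝ Y] [Nontrivial X] [Nontrivial Y]
    (p : ENNReal) [Fact (1 ≤ p)] (hp : 1 < p) :
    ¬ DecomposablyOctahedral (WithLp p (X × Y)) := by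
  intro hdoh
  obtain ⟨u, hu⟩ := exists_norm_eq X zero_le_one
  obtain ⟨v, hv⟩ := exists_norm_eq Y zero_le_one
  have hq : p.toReal⁻¹ < 1 := by
    rw [← ENNReal.toReal_inv]
    exact ENNReal.toReal_lt_of_lt_ofReal (by simpa using ENNReal.inv_lt_one.2 hp)
  obtain ⟨y, hy, hdoh⟩ := hdoh.exists_forall_add_eq (x₁ := toLp p (0, v)) (x₂ := toLp p (u, 0))
    (ε := (1 - p.toReal⁻¹) / 6) (by simpa) (by simpa) (by linarith)
  have hlower := hdoh (toLp p (y.fst, 0)) (toLp p (0, y.snd))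
    (by rw [← toLp_add, Prod.mk_add_mk, zero_add, add_zero]; rfl)
  simp only [← toLp_add, ← toLp_sub, Prod.mk_add_mk, Prod.mk_sub_mk, zero_add, add_zero,
    zero_sub, sub_zero] at hlower
  rw [prod_norm_toLp_congr (norm_neg y.fst) rfl, prod_norm_toLp_congr rfl (norm_neg y.snd)]
    at hlower
  have hupper := norm_toLp_fst_add_norm_toLp_snd_le hy.le hu hv
  linarith
end

section
/- The space ℓ1 ⊕_∞ ℓ1, that is, the product of the sequence space ℓ1 of absolutely summable real sequences with itself, equipped with the norm ‖(x, y)‖ = max(‖x‖_1, ‖y‖_1), is not decomposably octahedral. -/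
open WithLp

instance lp.nontrivial {α : Type*} [Nonempty α] {E : α → Type*} [∀ i, NormedAddCommGroup (E i)]
    [∀ i, Nontrivial (E i)] {p : ENNReal} : Nontrivial (lp E p) := by
  classical
  obtain ⟨i⟩ := ‹Nonempty α›
  obtain ⟨x, hx⟩ := exists_ne (0 : E i)
  refine ⟨lp.single p i x, 0, fun h => hx ?_⟩
  simpa using congrArg (fun f : lp E p => f i) h

theorem not_decomposablyOctahedral_withLp_top_prod (E F : Type*)
    [NormedAddCommGroup E] [NormedSpace ℝ E] [Nontrivial E]
    [NormedAddCommGroup F] [NormedSpace ℝ F] [Nontrivial F] :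
    ¬ DecomposablyOctahedral (WithLp ⊤ (E × F)) := by
  classical
  intro hdoh
  obtain ⟨e, he⟩ := exists_norm_eq E zero_le_one
  obtain ⟨f, hf⟩ := exists_norm_eq F zero_le_one
  set u : WithLp ⊤ (E × F) := toLp ⊤ (e, 0)
  set v : WithLp ⊤ (E × F) := toLp ⊤ (0, f)
  have hunit : ∀ x ∈ ({u, v} : Finset _), ‖x‖ = 1 := by simp [u, v, he, hf]
  obtain ⟨y, hy, hy_doh⟩ := hdoh {u, v} hunit (1 / 4) (by norm_num)
  have hy₁ : ‖y.fst‖ ≤ 1 := hy ▸ le_max_left _ _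
  have hy₂ : ‖y.snd‖ ≤ 1 := hy ▸ le_max_right _ _
  have hsplit : ∑ i, ![toLp ⊤ (y.fst, 0), toLp ⊤ (0, y.snd)] i = y := by
    simp only [Fin.sum_univ_two, Matrix.cons_val_zero, Matrix.cons_val_one, ← toLp_add,
      Prod.mk_add_mk, add_zero, zero_add]
    rfl
  have key := hy_doh 2 _ hsplit ![v, u] (by simp [Fin.forall_fin_two]) 1 1
    (fun _ => zero_le_one) (fun _ => zero_le_one)
  simp only [Fin.sum_univ_two, Pi.one_apply, one_smul, Matrix.cons_val_zero, Matrix.cons_val_one,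
    u, v, ← toLp_add, ← toLp_sub, Prod.mk_add_mk, Prod.mk_sub_mk, add_zero, zero_add, sub_zero,
    zero_sub, prod_norm_toLp, Prod.norm_mk, norm_neg, he, hf, max_eq_right hy₁, max_eq_left hy₂] at key
  norm_num at key

/-- The space `ℓ₁ ⊕_∞ ℓ₁` (with norm `‖(x, y)‖ = max (‖x‖₁, ‖y‖₁)`) is not DOH. -/
theorem not_doh_l1_sup_sum_l1 :
    ¬ DecomposablyOctahedral
      (WithLp ⊤ ((lp (fun _ : ℕ => ℝ) 1) × (lp (fun _ : ℕ => ℝ) 1))) :=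
  not_decomposablyOctahedral_withLp_top_prod _ _
end

section
/- The Banach space C[0,1] of continuous real-valued functions on the unit interval [0,1], equipped with the supremum norm, is not decomposably octahedral. -/
theorem exists_add_eq_of_abs_le_add {α : Type*} [AddCommGroup α] [Lattice α]
    [IsOrderedAddMonoid α] {y u v : α} (hu : 0 ≤ u) (hv : 0 ≤ v) (h : |y| ≤ u + v) :
    ∃ y₁ y₂, y₁ + y₂ = y ∧ |y₁| ≤ u ∧ |y₂| ≤ v := by
  refine ⟨y - (y ⊓ v ⊔ -v), y ⊓ v ⊔ -v, sub_add_cancel _ _, abs_le'.2 ⟨?_, ?_⟩,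
    abs_le'.2 ⟨sup_le inf_le_right (neg_le_self hv), neg_le.1 le_sup_right⟩⟩
  · rw [sub_le_iff_le_add]
    calc y ≤ (u + y) ⊓ (u + v) := le_inf (le_add_of_nonneg_left hu) ((le_abs_self y).trans h)
      _ = u + y ⊓ v := (add_inf y v u).symm
      _ ≤ u + (y ⊓ v ⊔ -v) := add_le_add_right le_sup_left u
  · rw [neg_sub, sub_le_iff_le_add]
    refine sup_le (inf_le_left.trans (le_add_of_nonneg_left hu)) ?_
    have := (neg_le_abs y).trans h
    rw [neg_le_iff_add_nonneg] at this ⊢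
    exact this.trans_eq (by abel)

theorem not_decomposablyOctahedral_of_forall_exists_split {X : Type*} [NormedAddCommGroup X]
    [NormedSpace ℝ X] {x₁ x₂ : X} (hx₁ : ‖x₁‖ = 1) (hx₂ : ‖x₂‖ = 1)
    (hsplit : ∀ y : X, ‖y‖ = 1 → ∃ y₁ y₂, y₁ + y₂ = y ∧
      ‖x₁ + y₁‖ ≤ 1 ∧ ‖x₁ - y₁‖ ≤ 1 ∧ ‖x₂ + y₂‖ ≤ 1 ∧ ‖x₂ - y₂‖ ≤ 1) :
    ¬ DecomposablyOctahedral X := by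
  classical
  intro hX
  obtain ⟨y, hy, hdoh⟩ := hX {x₁, x₂} (by simp [hx₁, hx₂]) (1 / 4) (by norm_num)
  obtain ⟨y₁, y₂, rfl, h₁, h₁', h₂, h₂'⟩ := hsplit y hy
  have := hdoh 2 ![y₁, y₂] (by simp) ![x₁, x₂] (fun i => by fin_cases i <;> simp)
    1 1 (fun _ => zero_le_one) (fun _ => zero_le_one)
  simp only [Fin.sum_univ_two, Matrix.cons_val_zero, Matrix.cons_val_one, Pi.one_apply,
    one_smul] at this
  linarith

section NormedLattice

variable {α : Type*} [NormedAddCommGroup α] [Lattice α] [HasSolidNorm α] [IsOrderedAddMonoid α]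

theorem norm_add_le_norm_abs_add_of_abs_le {x z w : α} (h : |z| ≤ w) : ‖x + z‖ ≤ ‖|x| + w‖ :=
  norm_le_norm_of_abs_le_abs <|
    (abs_add_le x z).trans <| (add_le_add_right h |x|).trans (le_abs_self _)

theorem norm_sub_le_norm_abs_add_of_abs_le {x z w : α} (h : |z| ≤ w) : ‖x - z‖ ≤ ‖|x| + w‖ := by
  rw [sub_eq_add_neg]
  exact norm_add_le_norm_abs_add_of_abs_le ((abs_neg z).trans_le h)

end NormedLattice

namespace ContinuousMap

variable {K : Type*} [TopologicalSpace K] [CompactSpace K]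

instance : HasSolidNorm C(K, ℝ) where
  solid f g h := (f.norm_le (norm_nonneg g)).2 fun t =>
    calc ‖f t‖ = |f| t := (abs_apply f t).symm
      _ ≤ |g| t := le_def.1 h t
      _ = ‖g t‖ := abs_apply g t
      _ ≤ ‖g‖ := g.norm_coe_le_norm t

theorem norm_eq_one_of_abs_le_one {f : C(K, ℝ)} (hle : ∀ t, |f t| ≤ 1) (t₀ : K)
    (ht₀ : |f t₀| = 1) : ‖f‖ = 1 :=
  le_antisymm ((f.norm_le zero_le_one).2 hle) (ht₀ ▸ f.norm_coe_le_norm t₀)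

theorem not_decomposablyOctahedral_of_abs_add_abs_eq_one {g h : C(K, ℝ)} (hg : ‖g‖ = 1)
    (hh : ‖h‖ = 1) (hgh : ∀ t, |g t| + |h t| = 1) : ¬ DecomposablyOctahedral C(K, ℝ) := by
  have hnorm : ‖|g| + |h|‖ ≤ 1 := ((|g| + |h|).norm_le zero_le_one).2 fun t => by
    simp [hgh t]
  refine not_decomposablyOctahedral_of_forall_exists_split hg hh fun y hy => ?_
  have hy_le : |y| ≤ |h| + |g| := le_def.2 fun t => by
    simpa [add_comm, hgh t, ← hy] using y.norm_coe_le_norm t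
  obtain ⟨y₁, y₂, hsum, hy₁, hy₂⟩ :=
    exists_add_eq_of_abs_le_add (abs_nonneg h) (abs_nonneg g) hy_le
  have hnorm' : ‖|h| + |g|‖ ≤ 1 := add_comm |g| |h| ▸ hnorm
  exact ⟨y₁, y₂, hsum, (norm_add_le_norm_abs_add_of_abs_le hy₁).trans hnorm,
    (norm_sub_le_norm_abs_add_of_abs_le hy₁).trans hnorm,
    (norm_add_le_norm_abs_add_of_abs_le hy₂).trans hnorm',
    (norm_sub_le_norm_abs_add_of_abs_le hy₂).trans hnorm'⟩

end ContinuousMap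

/-- The space `C[0,1]` with the supremum norm is not decomposably octahedral. -/
theorem not_doh_continuousMap_Icc :
    ¬ DecomposablyOctahedral C(Set.Icc (0 : ℝ) 1, ℝ) := by
  set g : C(Set.Icc (0 : ℝ) 1, ℝ) := ⟨Subtype.val, continuous_subtype_val⟩
  have hg : ∀ t, |g t| = t := fun t => abs_of_nonneg t.2.1
  have hh : ∀ t, |(1 - g) t| = 1 - t := fun t => abs_of_nonneg (sub_nonneg.2 t.2.2)
  refine ContinuousMap.not_decomposablyOctahedral_of_abs_add_abs_eq_one (g := g) (h := 1 - g)
    (ContinuousMap.norm_eq_one_of_abs_le_one (fun t => (hg t).trans_le t.2.2) 1 (hg 1))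
    (ContinuousMap.norm_eq_one_of_abs_le_one (fun t => (hh t).trans_le (by simp [t.2.1])) 0
      ((hh 0).trans (by simp)))
    fun t => by rw [hg t, hh t]; ring
end
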